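/- arXiv:2410.07411 — 5 statements merged into one kernel-verified Lean document; each statement's English description precedes it below -/
import Mathlib

section
/- In a partial cube, the Djoković–Winkler relation Θ is an equivalence relation on the edge set, and the isometric dimension of the partial cube equals the number of Θ-classes. -/
open SimpleGraph

/-- `f` is an isometric embedding of `G` into the hypercube `Q_n`
(whose graph distance is the Hamming distance on binary strings of length `n`). -/
def IsIsomEmb {V : Type} (G : SimpleGraph V) (n : ℕ) (f : V → Fin n → Bool) : Prop :=
  ∀ u v : V, hammingDist (f u) (f v) = G.dist u v

/-- The isometric dimension: the least `n` such that `G` embeds isometrically into `Q_n`. -/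
noncomputable def idim {V : Type} (G : SimpleGraph V) : ℕ :=
  sInf {n | ∃ f : V → Fin n → Bool, IsIsomEmb G n f}

/-- The Djoković–Winkler relation Θ on (potential) edges of `G`. -/
def Theta {V : Type} (G : SimpleGraph V) (e f : Sym2 V) : Prop :=
  ∃ x1 x2 y1 y2 : V, e = s(x1, x2) ∧ f = s(y1, y2) ∧
    G.dist x1 y1 + G.dist x2 y2 ≠ G.dist x1 y2 + G.dist x2 y1

open Finset

/-!
Fix an isometric embedding `f` of `G` into `Q_n`. Each edge `uv` has Hamming length one, so it
flips exactly one coordinate `i`. Writing the four distances in the definition of Θ as sums over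
coordinates, only coordinate `i` can contribute to the defect, and it does exactly when the other
edge flips `i` too. So two edges are in relation Θ iff they flip the same coordinate, which makes Θ
an equivalence relation whose classes are the sets of edges flipping a given coordinate. If `n` is
minimal, every coordinate is flipped by some edge (by connectivity, an unflipped coordinate is
constant and could be dropped), so these classes are distinct and nonempty, and there are `n` of them.
-/

theorem hammingDist_eq_sum {ι β : Type*} [Fintype ι] [DecidableEq β] (x y : ι → β) :
    hammingDist x y = ∑ k, if x k ≠ y k then 1 else 0 :=
  card_filter _ _

theorem hammingDist_add_hammingDist_ne_iff {ι : Type*} [Fintype ι] {a b c d : ι → Bool} {i : ι}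
    (hab : ∀ k, a k ≠ b k ↔ k = i) :
    hammingDist a c + hammingDist b d ≠ hammingDist a d + hammingDist b c ↔ c i ≠ d i := by
  classical
  have hbool : ∀ p q r s : Bool, p ≠ q →
      ((if p ≠ r then 1 else 0) + (if q ≠ s then 1 else 0) ≠
        ((if p ≠ s then 1 else 0) + (if q ≠ r then 1 else 0) : ℕ) ↔ r ≠ s) := by
    decide
  have hoff : ∀ k ∈ ({i}ᶜ : Finset ι),
      (if a k ≠ c k then 1 else 0) + (if b k ≠ d k then 1 else 0) =
        (if a k ≠ d k then 1 else 0) + (if b k ≠ c k then (1 : ℕ) else 0) := by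
    intro k hk
    have hk : a k = b k := not_not.1 fun h => by simp [(hab k).1 h] at hk
    rw [hk, add_comm]
  simp only [hammingDist_eq_sum, ← sum_add_distrib]
  rw [Fintype.sum_eq_add_sum_compl i, Fintype.sum_eq_add_sum_compl i, sum_congr rfl hoff,
    Ne, add_left_inj, ← Ne]
  exact hbool _ _ _ _ ((hab i).2 rfl)

theorem hammingDist_comp_succAbove {m : ℕ} {β : Type*} [DecidableEq β] {x y : Fin (m + 1) → β}
    {i : Fin (m + 1)} (h : x i = y i) :
    hammingDist (x ∘ i.succAbove) (y ∘ i.succAbove) = hammingDist x y := by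
  simp [hammingDist_eq_sum, Fin.sum_univ_succAbove _ i, h]

theorem SimpleGraph.Connected.eq_of_forall_adj {V β : Type*} {G : SimpleGraph V} {g : V → β}
    (hconn : G.Connected) (h : ∀ u v, G.Adj u v → g u = g v) (u v : V) : g u = g v := by
  obtain ⟨p⟩ := hconn u v
  induction p with
  | nil => rfl
  | cons hadj _ ih => exact (h _ _ hadj).trans ih

def FlipsAt {V ι β : Type*} (f : V → ι → β) (e : Sym2 V) (k : ι) : Prop :=
  Sym2.lift ⟨fun u v => f u k ≠ f v k, fun _ _ => propext ne_comm⟩ e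

@[simp]
theorem flipsAt_mk {V ι β : Type*} (f : V → ι → β) (u v : V) (k : ι) :
    FlipsAt f s(u, v) k ↔ f u k ≠ f v k :=
  Iff.rfl

namespace IsIsomEmb

variable {V : Type} {G : SimpleGraph V} {n : ℕ} {f : V → Fin n → Bool}

theorem exists_flipsAt_iff (hf : IsIsomEmb G n f) {e : Sym2 V} (he : e ∈ G.edgeSet) :
    ∃ i, ∀ k, FlipsAt f e k ↔ k = i := by
  induction e using Sym2.ind with
  | _ u v =>
    have h1 : hammingDist (f u) (f v) = 1 := by rw [hf, dist_eq_one_iff_adj]; exact he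
    obtain ⟨i, hi⟩ := card_eq_one.1 h1
    exact ⟨i, fun k => by simpa using Finset.ext_iff.1 hi k⟩

theorem theta_iff_flipsAt (hf : IsIsomEmb G n f) {e e' : Sym2 V} {i : Fin n}
    (hi : ∀ k, FlipsAt f e k ↔ k = i) : Theta G e e' ↔ FlipsAt f e' i := by
  constructor
  · rintro ⟨x1, x2, y1, y2, rfl, rfl, hne⟩
    rw [← hf, ← hf, ← hf, ← hf] at hne
    exact (hammingDist_add_hammingDist_ne_iff hi).1 hne
  · induction e using Sym2.ind with
    | _ x1 x2 =>
      induction e' using Sym2.ind with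
      | _ y1 y2 =>
        intro h
        refine ⟨x1, x2, y1, y2, rfl, rfl, ?_⟩
        rw [← hf, ← hf, ← hf, ← hf]
        exact (hammingDist_add_hammingDist_ne_iff hi).2 h

theorem theta_iff_eq (hf : IsIsomEmb G n f) {e e' : Sym2 V} {i j : Fin n}
    (hi : ∀ k, FlipsAt f e k ↔ k = i) (hj : ∀ k, FlipsAt f e' k ↔ k = j) :
    Theta G e e' ↔ i = j :=
  (hf.theta_iff_flipsAt hi).trans (hj i)

theorem exists_edge_flipsAt_of_le_idim (hconn : G.Connected) (hf : IsIsomEmb G n f)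
    (hn : n ≤ idim G) (i : Fin n) : ∃ e ∈ G.edgeSet, FlipsAt f e i := by
  by_contra! h
  have hconst : ∀ u v, f u i = f v i :=
    hconn.eq_of_forall_adj fun u v huv => not_not.1 (h s(u, v) huv)
  cases n with
  | zero => exact i.elim0
  | succ m =>
    have hdrop : IsIsomEmb G m (fun u => f u ∘ i.succAbove) := fun u v =>
      (hammingDist_comp_succAbove (hconst u v)).trans (hf u v)
    have : idim G ≤ m := Nat.sInf_le ⟨_, hdrop⟩
    omega

theorem ncard_thetaClasses (hf : IsIsomEmb G n f) (hflip : ∀ i, ∃ e ∈ G.edgeSet, FlipsAt f e i) :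
    {C : Set (Sym2 V) | ∃ e ∈ G.edgeSet, C = {e' | e' ∈ G.edgeSet ∧ Theta G e e'}}.ncard = n := by
  set Φ : Fin n → Set (Sym2 V) := fun i => {e | e ∈ G.edgeSet ∧ FlipsAt f e i}
  have hclass : ∀ {e i}, (∀ k, FlipsAt f e k ↔ k = i) →
      {e' | e' ∈ G.edgeSet ∧ Theta G e e'} = Φ i := fun hi =>
    Set.ext fun _ => and_congr_right fun _ => hf.theta_iff_flipsAt hi
  have hcoord : ∀ i, ∃ e ∈ G.edgeSet, ∀ k, FlipsAt f e k ↔ k = i := fun i => by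
    obtain ⟨e, he, hei⟩ := hflip i
    obtain ⟨j, hj⟩ := hf.exists_flipsAt_iff he
    exact ⟨e, he, by rwa [(hj i).1 hei]⟩
  have hrange : {C | ∃ e ∈ G.edgeSet, C = {e' | e' ∈ G.edgeSet ∧ Theta G e e'}} = Set.range Φ := by
    ext C
    constructor
    · rintro ⟨e, he, rfl⟩
      obtain ⟨i, hi⟩ := hf.exists_flipsAt_iff he
      exact ⟨i, (hclass hi).symm⟩
    · rintro ⟨i, rfl⟩
      obtain ⟨e, he, hi⟩ := hcoord i
      exact ⟨e, he, (hclass hi).symm⟩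
  have hinj : Function.Injective Φ := fun i j hij => by
    obtain ⟨e, he, hi⟩ := hcoord i
    have hej : e ∈ Φ j := hij ▸ ⟨he, (hi i).2 rfl⟩
    exact ((hi j).1 hej.2).symm
  rw [hrange, Set.ncard_range_of_injective hinj, Nat.card_eq_fintype_card, Fintype.card_fin]

end IsIsomEmb

theorem stmt2_general {V : Type} (G : SimpleGraph V)
    (hconn : G.Connected) (hpc : ∃ n f, IsIsomEmb G n f) :
    (∀ e ∈ G.edgeSet, Theta G e e) ∧
    (∀ e ∈ G.edgeSet, ∀ f ∈ G.edgeSet, Theta G e f → Theta G f e) ∧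
    (∀ e ∈ G.edgeSet, ∀ f ∈ G.edgeSet, ∀ g ∈ G.edgeSet,
      Theta G e f → Theta G f g → Theta G e g) ∧
    idim G = {C : Set (Sym2 V) |
      ∃ e ∈ G.edgeSet, C = {f | f ∈ G.edgeSet ∧ Theta G e f}}.ncard := by
  obtain ⟨f, hf⟩ : ∃ f : V → Fin (idim G) → Bool, IsIsomEmb G (idim G) f :=
    Nat.sInf_mem hpc
  refine ⟨fun e he => ?_, fun e he e' he' h => ?_, fun e he e' he' e'' he'' h h' => ?_, ?_⟩
  · obtain ⟨i, hi⟩ := hf.exists_flipsAt_iff he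
    exact (hf.theta_iff_eq hi hi).2 rfl
  · obtain ⟨i, hi⟩ := hf.exists_flipsAt_iff he
    obtain ⟨j, hj⟩ := hf.exists_flipsAt_iff he'
    exact (hf.theta_iff_eq hj hi).2 ((hf.theta_iff_eq hi hj).1 h).symm
  · obtain ⟨i, hi⟩ := hf.exists_flipsAt_iff he
    obtain ⟨j, hj⟩ := hf.exists_flipsAt_iff he'
    obtain ⟨k, hk⟩ := hf.exists_flipsAt_iff he''
    exact (hf.theta_iff_eq hi hk).2
      (((hf.theta_iff_eq hi hj).1 h).trans ((hf.theta_iff_eq hj hk).1 h'))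
  · exact (hf.ncard_thetaClasses (hf.exists_edge_flipsAt_of_le_idim hconn le_rfl)).symm

/-- In a partial cube, the relation Θ is an equivalence relation on the edge set,
and the isometric dimension equals the number of Θ-classes. -/
theorem stmt2 {V : Type} [Fintype V] [DecidableEq V] (G : SimpleGraph V)
    (hconn : G.Connected) (hpc : ∃ n f, IsIsomEmb G n f) :
    (∀ e ∈ G.edgeSet, Theta G e e) ∧
    (∀ e ∈ G.edgeSet, ∀ f ∈ G.edgeSet, Theta G e f → Theta G f e) ∧
    (∀ e ∈ G.edgeSet, ∀ f ∈ G.edgeSet, ∀ g ∈ G.edgeSet,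
      Theta G e f → Theta G f g → Theta G e g) ∧
    idim G = {C : Set (Sym2 V) |
      ∃ e ∈ G.edgeSet, C = {f | f ∈ G.edgeSet ∧ Theta G e f}}.ncard :=
  stmt2_general G hconn hpc
end

section
/- Every median graph is a partial cube, i.e., it embeds isometrically into a hypercube. -/
/-!
For an edge `ab` let `W_ab` be the set of vertices closer to `a` than to `b`. In a median graph
no vertex is equidistant from the ends of an edge, so `W_ab` and `W_ba` partition the vertices.
Each `W_ab` is convex, because the medians of `u, v, a` and of `u, v, b` coincide for
`u, v ∈ W_ab`. Convexity forces `W_xy = W_ab` whenever the edge `xy` crosses from `W_ab` to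
`W_ba`, so exactly one split `{W_ab, W_ba}` separates the ends of any edge, and the number of
splits separating two vertices is additive along geodesics; hence it equals their distance.
Recording, for each split, on which side a vertex lies relative to a fixed root gives an
isometric embedding into a hypercube.
-/

open SimpleGraph

/-- The interval `I(u,v)`: vertices lying on some shortest `u`–`v` path. -/
def interval {V : Type} (G : SimpleGraph V) (u v : V) : Set V :=
  {w | G.dist u w + G.dist w v = G.dist u v}

/-- A median graph: a connected graph in which every triple of vertices has a
unique vertex in the intersection of the three pairwise intervals. -/
def IsMedianGraph {V : Type} (G : SimpleGraph V) : Prop :=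
  G.Connected ∧ ∀ x y z : V,
    ∃! m : V, m ∈ interval G x y ∩ interval G y z ∩ interval G x z

section

variable {V : Type} {G : SimpleGraph V}

theorem interval_comm (u v : V) : interval G u v = interval G v u := by
  ext w
  simp only [interval, Set.mem_ofPred_eq, G.dist_comm (u := u), G.dist_comm (v := v), add_comm]

theorem interval_subset_of_mem (hG : G.Connected) {x z t : V} (hz : z ∈ interval G x t) :
    interval G x z ⊆ interval G x t := by
  intro y hy
  simp only [interval, Set.mem_ofPred_eq] at hy hz ⊢
  have := hG.dist_triangle (u := x) (v := y) (w := t)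
  have := hG.dist_triangle (u := y) (v := z) (w := t)
  omega

theorem exists_adj_mem_interval (hG : G.Connected) {u v : V} (huv : u ≠ v) :
    ∃ x, G.Adj u x ∧ x ∈ interval G u v := by
  obtain ⟨p, hp⟩ := hG.exists_walk_length_eq_dist u v
  cases p with
  | nil => exact absurd rfl huv
  | @cons _ x _ hux q =>
    refine ⟨x, hux, ?_⟩
    have hq := G.dist_le q
    have htri := hG.dist_triangle (u := u) (v := x) (w := v)
    show G.dist u x + G.dist x v = G.dist u v
    rw [Walk.length_cons] at hp
    rw [dist_eq_one_iff_adj.mpr hux] at htri ⊢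
    omega

def halfspace (G : SimpleGraph V) (a b : V) : Set V := {z | G.dist z a < G.dist z b}

theorem halfspace_disjoint (a b : V) : Disjoint (halfspace G a b) (halfspace G b a) :=
  Set.disjoint_left.mpr fun z (h : G.dist z a < G.dist z b) h' => lt_asymm h h'

theorem left_mem_halfspace {a b : V} (hab : G.Adj a b) : a ∈ halfspace G a b := by
  simp [halfspace, dist_eq_one_iff_adj.mpr hab]

theorem interval_left_subset_halfspace (hG : G.Connected) {a b z : V} (hz : z ∈ halfspace G a b) :
    interval G z a ⊆ halfspace G a b := by
  intro y hy
  simp only [halfspace, interval, Set.mem_ofPred_eq] at hy hz ⊢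
  have := hG.dist_triangle (u := z) (v := y) (w := b)
  omega

theorem mem_interval_of_mem_halfspace (hG : G.Connected) {a b z : V} (hab : G.Adj a b)
    (hz : z ∈ halfspace G a b) : a ∈ interval G z b := by
  simp only [halfspace, interval, Set.mem_ofPred_eq, dist_eq_one_iff_adj.mpr hab] at hz ⊢
  have := hG.dist_triangle (u := z) (v := a) (w := b)
  rw [dist_eq_one_iff_adj.mpr hab] at this
  omega

def separating (S : Set (Set V)) (u v : V) : Set (Set V) := {s ∈ S | ¬(u ∈ s ↔ v ∈ s)}

theorem separating_comm (S : Set (Set V)) (u v : V) : separating S u v = separating S v u := by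
  simp only [separating, iff_comm]

def rootedHalfspaces (G : SimpleGraph V) (r : V) : Set (Set V) :=
  {s | r ∈ s ∧ ∃ a b, G.Adj a b ∧ s = halfspace G a b}

namespace IsMedianGraph

variable (hG : IsMedianGraph G)
include hG

theorem dist_ne_of_adj {x y : V} (hxy : G.Adj x y) (z : V) : G.dist z x ≠ G.dist z y := by
  obtain ⟨m, ⟨⟨hm_xy, hm_yz⟩, hm_xz⟩, -⟩ := hG.2 x y z
  simp only [interval, Set.mem_ofPred_eq, dist_eq_one_iff_adj.mpr hxy] at hm_xy hm_yz hm_xz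
  rw [G.dist_comm (u := z), G.dist_comm (u := z)]
  have := G.dist_comm (u := y) (v := m)
  omega

theorem mem_halfspace_or {a b : V} (hab : G.Adj a b) (z : V) :
    z ∈ halfspace G a b ∨ z ∈ halfspace G b a :=
  (hG.dist_ne_of_adj hab z).lt_or_gt

theorem interval_subset_halfspace {a b u v : V} (hab : G.Adj a b)
    (hu : u ∈ halfspace G a b) (hv : v ∈ halfspace G a b) :
    interval G u v ⊆ halfspace G a b := by
  intro w hw
  by_contra hwa
  -- Two median steps from `w` towards `b` lead to a point `t` of `halfspace G b a` that is a
  -- median of `u, v, b`; but so is the median `m` of `u, v, a`, which lies in `halfspace G a b`.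
  have hwb : w ∈ halfspace G b a := (hG.mem_halfspace_or hab w).resolve_left hwa
  obtain ⟨s, ⟨⟨hs_uw, hs_wb⟩, hs_ub⟩, -⟩ := hG.2 u w b
  obtain ⟨t, ⟨⟨ht_vs, ht_sb⟩, ht_vb⟩, -⟩ := hG.2 v s b
  obtain ⟨m, ⟨⟨hm_uv, hm_va⟩, hm_ua⟩, -⟩ := hG.2 u v a
  have hs_uv : s ∈ interval G u v := interval_subset_of_mem hG.1 hw hs_uw
  have ht_uv : t ∈ interval G u v := by
    rw [interval_comm] at hs_uv ⊢
    exact interval_subset_of_mem hG.1 hs_uv ht_vs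
  have ht_ub : t ∈ interval G u b := by
    rw [interval_comm] at hs_ub ht_sb ⊢
    exact interval_subset_of_mem hG.1 hs_ub ht_sb
  have ht_wb : t ∈ interval G w b := by
    rw [interval_comm] at hs_wb ht_sb ⊢
    exact interval_subset_of_mem hG.1 hs_wb ht_sb
  have hm_vb : m ∈ interval G v b :=
    interval_subset_of_mem hG.1 (mem_interval_of_mem_halfspace hG.1 hab hv) hm_va
  have hm_ub : m ∈ interval G u b :=
    interval_subset_of_mem hG.1 (mem_interval_of_mem_halfspace hG.1 hab hu) hm_ua
  have htm : t = m := (hG.2 u v b).unique ⟨⟨ht_uv, ht_vb⟩, ht_ub⟩ ⟨⟨hm_uv, hm_vb⟩, hm_ub⟩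
  have hta : t ∈ halfspace G a b := htm ▸ interval_left_subset_halfspace hG.1 hu hm_ua
  have htb : t ∈ halfspace G b a := interval_left_subset_halfspace hG.1 hwb ht_wb
  exact Set.disjoint_left.mp (halfspace_disjoint a b) hta htb

theorem halfspace_subset_of_cross {a b x y : V} (hab : G.Adj a b) (hxy : G.Adj x y)
    (hx : x ∈ halfspace G a b) (hy : y ∈ halfspace G b a) :
    halfspace G a b ⊆ halfspace G x y := by
  intro z hz
  by_contra hzx
  have hzy : z ∈ halfspace G y x := (hG.mem_halfspace_or hxy z).resolve_left hzx
  have hy' : y ∈ halfspace G a b :=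
    hG.interval_subset_halfspace hab hz hx (mem_interval_of_mem_halfspace hG.1 hxy.symm hzy)
  exact Set.disjoint_left.mp (halfspace_disjoint a b) hy' hy

theorem halfspace_eq_of_cross {a b x y : V} (hab : G.Adj a b) (hxy : G.Adj x y)
    (hx : x ∈ halfspace G a b) (hy : y ∈ halfspace G b a) :
    halfspace G x y = halfspace G a b := by
  refine (hG.halfspace_subset_of_cross hab hxy hx hy).antisymm' fun z hz => ?_
  by_contra hza
  have hzb : z ∈ halfspace G b a := (hG.mem_halfspace_or hab z).resolve_left hza
  exact Set.disjoint_left.mp (halfspace_disjoint x y) hz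
    (hG.halfspace_subset_of_cross hab.symm hxy.symm hy hx hzb)

theorem halfspace_eq_or_of_separates {a b u x : V} (hab : G.Adj a b) (hux : G.Adj u x)
    (h : ¬(u ∈ halfspace G a b ↔ x ∈ halfspace G a b)) :
    halfspace G a b = halfspace G u x ∨ halfspace G a b = halfspace G x u := by
  by_cases hu : u ∈ halfspace G a b
  · have hx := (hG.mem_halfspace_or hab x).resolve_left fun hx => h (iff_of_true hu hx)
    exact .inl (hG.halfspace_eq_of_cross hab hux hu hx).symm
  · have hx : x ∈ halfspace G a b := by tauto
    have hu' := (hG.mem_halfspace_or hab u).resolve_left hu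
    exact .inr (hG.halfspace_eq_of_cross hab hux.symm hx hu').symm

theorem separating_rootedHalfspaces_of_adj {r u x : V} (hux : G.Adj u x)
    (hr : r ∈ halfspace G u x) :
    separating (rootedHalfspaces G r) u x = {halfspace G u x} := by
  ext s
  simp only [separating, rootedHalfspaces, Set.mem_ofPred_eq, Set.mem_singleton_iff]
  constructor
  · rintro ⟨⟨hrs, a, b, hab, rfl⟩, hsep⟩
    refine (hG.halfspace_eq_or_of_separates hab hux hsep).resolve_right fun h => ?_
    rw [h] at hrs
    exact Set.disjoint_left.mp (halfspace_disjoint u x) hr hrs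
  · rintro rfl
    refine ⟨⟨hr, u, x, hux, rfl⟩, fun h => ?_⟩
    exact Set.disjoint_left.mp (halfspace_disjoint x u) (left_mem_halfspace hux.symm)
      (h.mp (left_mem_halfspace hux))

theorem ncard_separating_rootedHalfspaces_of_adj (r : V) {u x : V} (hux : G.Adj u x) :
    (separating (rootedHalfspaces G r) u x).ncard = 1 := by
  rcases hG.mem_halfspace_or hux r with hr | hr
  · rw [hG.separating_rootedHalfspaces_of_adj hux hr, Set.ncard_singleton]
  · rw [separating_comm, hG.separating_rootedHalfspaces_of_adj hux.symm hr, Set.ncard_singleton]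

theorem mem_iff_mem_of_mem_interval {r u v w : V} {s : Set V} (hs : s ∈ rootedHalfspaces G r)
    (hw : w ∈ interval G u v) (huv : u ∈ s ↔ v ∈ s) : w ∈ s ↔ u ∈ s := by
  obtain ⟨-, a, b, hab, rfl⟩ := hs
  by_cases hu : u ∈ halfspace G a b
  · exact iff_of_true (hG.interval_subset_halfspace hab hu (huv.mp hu) hw) hu
  · have hu' := (hG.mem_halfspace_or hab u).resolve_left hu
    have hv' := (hG.mem_halfspace_or hab v).resolve_left (huv.not.mp hu)
    have hw' := hG.interval_subset_halfspace hab.symm hu' hv' hw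
    exact iff_of_false (Set.disjoint_right.mp (halfspace_disjoint a b) hw') hu

theorem separating_rootedHalfspaces_eq_union (r : V) {u v w : V} (hw : w ∈ interval G u v) :
    separating (rootedHalfspaces G r) u v =
      separating (rootedHalfspaces G r) u w ∪ separating (rootedHalfspaces G r) w v := by
  ext s
  simp only [separating, Set.mem_union, Set.mem_ofPred_eq]
  by_cases hs : s ∈ rootedHalfspaces G r
  · have := hG.mem_iff_mem_of_mem_interval hs hw
    tauto
  · simp only [hs, false_and, or_self]

theorem disjoint_separating_rootedHalfspaces (r : V) {u v w : V} (hw : w ∈ interval G u v) :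
    Disjoint (separating (rootedHalfspaces G r) u w) (separating (rootedHalfspaces G r) w v) := by
  refine Set.disjoint_left.mpr fun s ⟨hs, huw⟩ ⟨_, hwv⟩ => ?_
  have := hG.mem_iff_mem_of_mem_interval hs hw
  tauto

theorem ncard_separating_rootedHalfspaces [Finite V] (r u v : V) :
    (separating (rootedHalfspaces G r) u v).ncard = G.dist u v := by
  induction hd : G.dist u v using Nat.strong_induction_on generalizing u with
  | _ n ih =>
  by_cases huv : u = v
  · subst huv
    simp [separating, ← hd]
  · obtain ⟨x, hux, hx⟩ := exists_adj_mem_interval hG.1 huv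
    have hxv : 1 + G.dist x v = n := by
      rwa [interval, Set.mem_ofPred_eq, dist_eq_one_iff_adj.mpr hux, hd] at hx
    rw [hG.separating_rootedHalfspaces_eq_union r hx,
      Set.ncard_union_eq (hG.disjoint_separating_rootedHalfspaces r hx),
      hG.ncard_separating_rootedHalfspaces_of_adj r hux, ih _ (by omega) x rfl, hxv]

end IsMedianGraph

theorem exists_isIsomEmb_of_ncard_separating (S : Set (Set V)) (hS : S.Finite)
    (h : ∀ u v, (separating S u v).ncard = G.dist u v) :
    ∃ n f, IsIsomEmb G n f := by
  classical
  have := hS.to_subtype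
  let e := Finite.equivFin S
  refine ⟨Nat.card S, fun v i => decide (v ∈ (e.symm i : Set V)), fun u v => ?_⟩
  rw [← h, hammingDist, ← Fintype.card_subtype, ← Nat.card_eq_fintype_card,
    ← Nat.card_coe_set_eq]
  exact Nat.card_congr ((e.symm.subtypeEquiv fun i => by simp [decide_eq_decide]).trans
    (Equiv.subtypeSubtypeEquivSubtypeInter (· ∈ S) _))

end

/-- Every median graph is a partial cube: it embeds isometrically into a hypercube. -/
theorem stmt5 {V : Type} [Fintype V] (G : SimpleGraph V) (hmed : IsMedianGraph G) :
    ∃ n : ℕ, ∃ f : V → Fin n → Bool, IsIsomEmb G n f := by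
  obtain ⟨r⟩ := hmed.1.nonempty
  exact exists_isIsomEmb_of_ncard_separating _ (Set.toFinite _)
    (hmed.ncard_separating_rootedHalfspaces r)
end

section
/- An order embedding of a finite distributive lattice into the Boolean lattice {0,1}^n induces an isometric embedding of its Hasse diagram (as an undirected graph) into the hypercube Q_n, provided the embedding sends covering relations to covering relations. -/
open SimpleGraph Finset

/-!
Every edge of the Hasse diagram is sent to a pair at Hamming distance one, so Hamming distance
is a lower bound for the graph distance. For the upper bound, the key point is that `f`
preserves joins: along a chain of covers `a ⋖ c` from `a ⊓ b` up to `a`, modularity makes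
`a ⊔ b ⩿ c ⊔ b`, and the at most one new coordinate of `f (c ⊔ b)` must be a coordinate of
`f c`, since `f` reflects the order and `c ≰ a ⊔ b`. A chain of covers from `a` up to `a ⊔ b`
and back down to `b` then has length
`d(f a, f a ⊔ f b) + d(f a ⊔ f b, f b) = d(f a, f b)`.
-/

section Hamming

variable {ι β : Type*} [Fintype ι]

theorem hammingDist_add_hammingDist_of_forall_eq_or_eq [DecidableEq β] {x y z : ι → β}
    (h : ∀ i, y i = x i ∨ y i = z i) :
    hammingDist x y + hammingDist y z = hammingDist x z := by
  simp only [hammingDist, card_filter, ← sum_add_distrib]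
  refine sum_congr rfl fun i _ => ?_
  rcases h i with h | h <;> rw [h] <;> split_ifs <;> simp_all

theorem hammingDist_add_hammingDist_sup [LinearOrder β] (x y : ι → β) :
    hammingDist x (x ⊔ y) + hammingDist (x ⊔ y) y = hammingDist x y :=
  hammingDist_add_hammingDist_of_forall_eq_or_eq fun i => max_choice (x i) (y i)

theorem hammingDist_add_hammingDist_of_le_of_le {x y z : ι → Bool} (hxy : x ≤ y)
    (hyz : y ≤ z) :
    hammingDist x y + hammingDist y z = hammingDist x z :=
  have between : ∀ a b c : Bool, a ≤ b → b ≤ c → b = a ∨ b = c := by decide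
  hammingDist_add_hammingDist_of_forall_eq_or_eq fun i => between _ _ _ (hxy i) (hyz i)

theorem le_sup_of_hammingDist_eq_one {u v w : ι → Bool}
    (hd : hammingDist u v = 1) (hwv : w ≤ v) (hwu : ¬ w ≤ u) : v ≤ u ⊔ w := by
  obtain ⟨i, hi⟩ := card_eq_one.1 hd
  have hdiff : ∀ j, u j ≠ v j → j = i := fun j hj =>
    mem_singleton.1 (hi ▸ mem_filter.2 ⟨mem_univ j, hj⟩)
  obtain ⟨j, hj⟩ := not_forall.1 hwu
  have strict : ∀ a b : Bool, ¬ b ≤ a → a = false ∧ b = true := by decide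
  obtain ⟨huj, hwj⟩ := strict _ _ hj
  have hvj : v j = true := Bool.le_iff_imp.1 (hwv j) hwj
  intro t
  by_cases hut : u t = v t
  · exact hut ▸ le_sup_left
  · rw [hdiff t hut, ← hdiff j (by simp [huj, hvj]), Pi.sup_apply, hwj]
    exact le_sup_of_le_right le_top

end Hamming

theorem CovBy.sup_wcovBy_sup_right {α : Type*} [Lattice α] [IsModularLattice α] {a c : α}
    (h : a ⋖ c) (b : α) : a ⊔ b ⩿ c ⊔ b := by
  refine ⟨sup_le_sup_right h.le b, fun z hz hz' => ?_⟩
  rcases h.eq_or_eq (le_inf (le_sup_left.trans hz.le) h.le) inf_le_right with ha | hc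
  · refine hz.ne' ?_
    calc z = (c ⊔ b) ⊓ z := (inf_eq_right.2 hz'.le).symm
      _ = (c ⊓ z) ⊔ b := by
        rw [sup_comm, sup_inf_assoc_of_le _ (le_sup_right.trans hz.le), sup_comm]
      _ = a ⊔ b := by rw [inf_comm, ha]
  · exact hz'.not_ge (sup_le (hc ▸ inf_le_left) (le_sup_right.trans hz.le))

section HasseDiagram

variable {L ι : Type*} [Fintype ι] {f : L → ι → Bool}

theorem hammingDist_le_length_of_covBy [Preorder L]
    (hcov : ∀ a b : L, a ⋖ b → hammingDist (f a) (f b) = 1) {a b : L}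
    (p : (hasse L).Walk a b) :
    hammingDist (f a) (f b) ≤ p.length := by
  induction p with
  | nil => simp
  | @cons u v w huv q ih =>
    have hstep : hammingDist (f u) (f v) = 1 := by
      rcases hasse_adj.1 huv with h | h
      · exact hcov u v h
      · rw [hammingDist_comm]; exact hcov v u h
    calc hammingDist (f u) (f w) ≤ hammingDist (f u) (f v) + hammingDist (f v) (f w) :=
          hammingDist_triangle _ _ _
      _ ≤ 1 + q.length := by omega
      _ = (Walk.cons huv q).length := by rw [Walk.length_cons, add_comm]

theorem exists_hasse_walk_length_eq_hammingDist [PartialOrder L] [Finite L] (hf : Monotone f)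
    (hcov : ∀ a b : L, a ⋖ b → hammingDist (f a) (f b) = 1) {a b : L} (hab : a ≤ b) :
    ∃ p : (hasse L).Walk a b, p.length = hammingDist (f a) (f b) := by
  induction a using WellFoundedGT.induction with
  | _ a ih =>
  rcases hab.eq_or_lt with rfl | hlt
  · exact ⟨Walk.nil, by simp⟩
  obtain ⟨c, hac, hcb⟩ := exists_covBy_le_of_lt hlt
  obtain ⟨p, hp⟩ := ih c hac.lt hcb
  refine ⟨Walk.cons (hasse_adj.2 (Or.inl hac)) p, ?_⟩
  rw [Walk.length_cons, hp, ← hammingDist_add_hammingDist_of_le_of_le (hf hac.le) (hf hcb),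
    hcov a c hac, add_comm]

variable [Lattice L] (hf : ∀ a b : L, a ≤ b ↔ f a ≤ f b)
  (hcov : ∀ a b : L, a ⋖ b → hammingDist (f a) (f b) = 1)
include hf hcov

theorem map_sup_le_map_sup_sup_of_covBy [IsModularLattice L] {a c : L} (hac : a ⋖ c) (b : L) :
    f (c ⊔ b) ≤ f (a ⊔ b) ⊔ f c := by
  rcases (hac.sup_wcovBy_sup_right b).eq_or_covBy with heq | hsup
  · rw [heq]; exact le_sup_left
  have hc : ¬ c ≤ a ⊔ b := fun h => hsup.lt.not_ge (sup_le h le_sup_right)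
  exact le_sup_of_hammingDist_eq_one (hcov _ _ hsup) ((hf _ _).1 le_sup_left)
    (fun h => hc ((hf _ _).2 h))

theorem map_sup_le_map_sup_sup_of_le [IsModularLattice L] [Finite L] {a c : L} (hac : a ≤ c)
    (b : L) :
    f (c ⊔ b) ≤ f (a ⊔ b) ⊔ f c := by
  induction a using WellFoundedGT.induction with
  | _ a ih =>
  rcases hac.eq_or_lt with rfl | hlt
  · exact le_sup_left
  obtain ⟨d, had, hdc⟩ := exists_covBy_le_of_lt hlt
  calc f (c ⊔ b) ≤ f (d ⊔ b) ⊔ f c := ih d had.lt hdc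
    _ ≤ (f (a ⊔ b) ⊔ f d) ⊔ f c :=
      sup_le_sup_right (map_sup_le_map_sup_sup_of_covBy hf hcov had b) _
    _ ≤ f (a ⊔ b) ⊔ f c := by rw [sup_assoc, sup_eq_right.2 ((hf _ _).1 hdc)]

theorem map_sup_of_covBy [IsModularLattice L] [Finite L] (a b : L) : f (a ⊔ b) = f a ⊔ f b := by
  refine le_antisymm ?_ (sup_le ((hf _ _).1 le_sup_left) ((hf _ _).1 le_sup_right))
  simpa [sup_comm] using map_sup_le_map_sup_sup_of_le hf hcov (inf_le_left : a ⊓ b ≤ a) b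

end HasseDiagram

/-- An order embedding of a finite distributive lattice into the Boolean lattice
`{0,1}^n` that sends covering relations to covering relations induces an isometric
embedding of its Hasse diagram (as an undirected graph) into the hypercube `Q_n`
(with Hamming distance). -/
theorem stmt11 {L : Type} [DistribLattice L] [Fintype L] (n : ℕ)
    (f : L → Fin n → Bool)
    (hemb : ∀ a b : L, a ≤ b ↔ f a ≤ f b)
    (hcov : ∀ a b : L, a ⋖ b → f a ≤ f b ∧ hammingDist (f a) (f b) = 1) :
    ∀ a b : L, hammingDist (f a) (f b) = (SimpleGraph.hasse L).dist a b := by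
  intro a b
  have hcov' : ∀ a b : L, a ⋖ b → hammingDist (f a) (f b) = 1 := fun a b h => (hcov a b h).2
  have hmono : Monotone f := fun a b => (hemb a b).1
  obtain ⟨p, hp⟩ := exists_hasse_walk_length_eq_hammingDist hmono hcov' (le_sup_left (b := b))
  obtain ⟨q, hq⟩ := exists_hasse_walk_length_eq_hammingDist hmono hcov' (le_sup_right (a := a))
  have hpq : (p.append q.reverse).length = hammingDist (f a) (f b) := by
    rw [Walk.length_append, Walk.length_reverse, hp, hq, hammingDist_comm (f b),
      map_sup_of_covBy hemb hcov', hammingDist_add_hammingDist_sup]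
  obtain ⟨r, hr⟩ := (p.append q.reverse).reachable.exists_walk_length_eq_dist
  exact le_antisymm (hr ▸ hammingDist_le_length_of_covBy hcov' r) (hpq ▸ dist_le _)
end

section
/- Every bipartite graph with a unique perfect matching has an edge whose removal (along with its endpoints) leaves a graph with a unique perfect matching; equivalently, a bipartite graph with exactly one perfect matching contains a pendant edge belonging to that matching. -/
/-!
Let `f` be the partner map of the unique perfect matching `M`. If every vertex `x` had a
neighbour `g x ≠ f x`, then in a bipartite graph `f ∘ g` would preserve the colour classes, so
it would have a periodic orbit `S` inside one class; matching each `x ∈ S` to `g x` instead of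
`f x` (and keeping `M` elsewhere) gives a second perfect matching. So some vertex `v` has its
partner `w` as its only neighbour. Since `{v, w}` is a union of `M`-edges, every perfect matching
of `G - v - w` extends by `vw` to a perfect matching of `G`, and uniqueness passes to `G - v - w`.
-/

open SimpleGraph Set Function

theorem Function.periodicPts_nonempty {α : Type*} [Finite α] [Nonempty α] (f : α → α) :
    (periodicPts f).Nonempty := by
  obtain ⟨x⟩ := ‹Nonempty α›
  have key : ∀ i j, i < j → f^[i] x = f^[j] x → (periodicPts f).Nonempty := fun i j hij heq =>
    ⟨f^[i] x, mk_mem_periodicPts (Nat.sub_pos_of_lt hij) <| by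
      rw [IsPeriodicPt, IsFixedPt, ← iterate_add_apply, Nat.sub_add_cancel hij.le, heq]⟩
  obtain ⟨i, j, hne, heq⟩ := Finite.exists_ne_map_eq_of_infinite (fun n => f^[n] x)
  rcases hne.lt_or_gt with hij | hji
  · exact key i j hij heq
  · exact key j i hji heq.symm

namespace SimpleGraph.Subgraph

variable {V : Type*} {G : SimpleGraph V} {M : G.Subgraph}

theorem IsMatching.mem_pair_iff_of_adj {v w : V} (hM : M.IsMatching) (hvw : M.Adj v w) {x y : V}
    (hxy : M.Adj x y) : x ∈ ({v, w} : Set V) ↔ y ∈ ({v, w} : Set V) := by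
  simp only [mem_insert_iff, mem_singleton_iff]
  constructor
  · rintro (rfl | rfl)
    · exact .inr (hM.eq_of_adj_left hxy hvw)
    · exact .inl (hM.eq_of_adj_left hxy hvw.symm)
  · rintro (rfl | rfl)
    · exact .inr (hM.eq_of_adj_right hxy hvw.symm)
    · exact .inl (hM.eq_of_adj_right hxy hvw)

theorem IsPerfectMatching.comap_induce (hM : M.IsPerfectMatching) {s : Set V}
    (hs : ∀ x y, M.Adj x y → (x ∈ s ↔ y ∈ s)) :
    (M.comap (Embedding.induce s).toHom).IsPerfectMatching := by
  rw [isPerfectMatching_iff]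
  intro p
  obtain ⟨w, hw, hw_unique⟩ := hM.1 (hM.2 p)
  exact ⟨⟨w, (hs _ _ hw).1 p.2⟩, ⟨M.adj_sub hw, hw⟩,
    fun q hq => Subtype.ext (hw_unique _ hq.2)⟩

theorem IsPerfectMatching.map_induce_sup_map_induce_compl {s : Set V}
    {N : (G.induce s).Subgraph} {P : (G.induce sᶜ).Subgraph}
    (hN : N.IsPerfectMatching) (hP : P.IsPerfectMatching) :
    (N.map (Embedding.induce s).toHom ⊔
      P.map (Embedding.induce sᶜ).toHom).IsPerfectMatching := by
  have hNs : (N.map (Embedding.induce s).toHom).verts = s := by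
    rw [map_verts, hN.2.verts_eq_univ, image_univ]
    exact Subtype.range_coe
  have hPs : (P.map (Embedding.induce sᶜ).toHom).verts = sᶜ := by
    rw [map_verts, hP.2.verts_eq_univ, image_univ]
    exact Subtype.range_coe
  have hNm := hN.1.map (Embedding.induce s).toHom Subtype.val_injective
  have hPm := hP.1.map (Embedding.induce sᶜ).toHom Subtype.val_injective
  refine ⟨hNm.sup hPm ?_, fun v => ?_⟩
  · rw [hNm.support_eq_verts, hPm.support_eq_verts, hNs, hPs]
    exact disjoint_compl_right
  · rw [verts_sup, hNs, hPs, union_compl_self]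
    exact mem_univ v

theorem comap_induce_map_induce_sup_map_induce_compl {s : Set V}
    (N : (G.induce s).Subgraph) (P : (G.induce sᶜ).Subgraph) :
    (N.map (Embedding.induce s).toHom ⊔ P.map (Embedding.induce sᶜ).toHom).comap
      (Embedding.induce s).toHom = N := by
  ext p q
  · simp
  · simpa [Relation.Map] using fun h => N.adj_sub h

theorem IsPerfectMatching.existsUnique_induce (hM : M.IsPerfectMatching)
    (huniq : ∀ M' : G.Subgraph, M'.IsPerfectMatching → M' = M) {s : Set V}
    (hs : ∀ x y, M.Adj x y → (x ∈ s ↔ y ∈ s)) :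
    ∃! N : (G.induce s).Subgraph, N.IsPerfectMatching := by
  refine ⟨M.comap (Embedding.induce s).toHom, hM.comap_induce hs, fun N hN => ?_⟩
  have hP := hM.comap_induce (s := sᶜ) fun x y hxy => not_congr (hs x y hxy)
  rw [← comap_induce_map_induce_sup_map_induce_compl N (M.comap (Embedding.induce sᶜ).toHom),
    huniq _ (hN.map_induce_sup_map_induce_compl hP)]

theorem IsPerfectMatching.exists_isPerfectMatching_forall_adj (hM : M.IsPerfectMatching)
    {S : Set V} {g : V → V} (hg : ∀ x ∈ S, G.Adj x (g x)) (hinj : InjOn g S)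
    (hdisj : Disjoint S (g '' S)) (hpartner : ∀ x y, M.Adj x y → (x ∈ S ↔ y ∈ g '' S)) :
    ∃ M' : G.Subgraph, M'.IsPerfectMatching ∧ ∀ x ∈ S, M'.Adj x (g x) := by
  set T := g '' S
  let M' : G.Subgraph :=
    { verts := univ
      Adj p q := (p ∈ S ∧ q = g p) ∨ (q ∈ S ∧ p = g q) ∨
        (p ∉ S ∪ T ∧ q ∉ S ∪ T ∧ M.Adj p q)
      adj_sub := by
        rintro p q (⟨hp, rfl⟩ | ⟨hq, rfl⟩ | ⟨-, -, h⟩)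
        · exact hg p hp
        · exact (hg q hq).symm
        · exact M.adj_sub h
      edge_vert _ := mem_univ _
      symm := ⟨by
        rintro p q (⟨hp, rfl⟩ | ⟨hq, rfl⟩ | ⟨hp, hq, h⟩)
        exacts [.inr (.inl ⟨hp, rfl⟩), .inl ⟨hq, rfl⟩,
          .inr (.inr ⟨hq, hp, h.symm⟩)]⟩ }
  refine ⟨M', isPerfectMatching_iff.mpr fun p => ?_, fun x hx => .inl ⟨hx, rfl⟩⟩
  by_cases hpS : p ∈ S
  · refine ⟨g p, .inl ⟨hpS, rfl⟩, ?_⟩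
    rintro y (⟨-, rfl⟩ | ⟨hy, rfl⟩ | ⟨hp, -⟩)
    · rfl
    · exact absurd (mem_image_of_mem g hy) (Set.disjoint_left.mp hdisj hpS)
    · exact absurd (.inl hpS) hp
  by_cases hpT : p ∈ T
  · obtain ⟨z, hz, rfl⟩ := hpT
    refine ⟨z, .inr (.inl ⟨hz, rfl⟩), ?_⟩
    rintro y (⟨hp, -⟩ | ⟨hy, hzy⟩ | ⟨hp, -⟩)
    · exact absurd hp hpS
    · exact (hinj hz hy hzy).symm
    · exact absurd (.inr (mem_image_of_mem g hz)) hp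
  obtain ⟨w, hw, hw_unique⟩ := hM.1 (hM.2 p)
  have hpST : p ∉ S ∪ T := by simp [hpS, hpT]
  have hwST : w ∉ S ∪ T := by
    rw [mem_union, hpartner w p hw.symm, ← hpartner p w hw]
    tauto
  refine ⟨w, .inr (.inr ⟨hpST, hwST, hw⟩), ?_⟩
  rintro y (⟨hp, -⟩ | ⟨hy, rfl⟩ | ⟨-, -, hy⟩)
  · exact absurd hp hpS
  · exact absurd (mem_image_of_mem g hy) hpT
  · exact hw_unique y hy

theorem IsPerfectMatching.exists_neighborSet_eq_singleton [Finite V] [Nonempty V]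
    (hbip : G.Colorable 2) (hM : M.IsPerfectMatching)
    (huniq : ∀ M' : G.Subgraph, M'.IsPerfectMatching → M' = M) :
    ∃ v w, M.Adj v w ∧ G.neighborSet v = {w} := by
  obtain ⟨c⟩ := hbip
  choose f hf hf_unique using isPerfectMatching_iff.mp hM
  have hff : ∀ x, f (f x) = x := fun x => (hf_unique _ _ (hf x).symm).symm
  by_contra! hno
  have hother : ∀ v, ∃ u, G.Adj v u ∧ u ≠ f v := fun v => by
    by_contra! h
    exact hno v (f v) (hf v) (eq_singleton_iff_unique_mem.mpr ⟨M.adj_sub (hf v), h⟩)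
  choose g hg hgf using hother
  have hcol : ∀ x, c (f (g x)) = c x := fun x => by
    have h₁ := c.valid (hg x)
    have h₂ := c.valid (M.adj_sub (hf (g x)))
    omega
  obtain ⟨x₀, hx₀⟩ := periodicPts_nonempty (f ∘ g)
  set S := periodicPts (f ∘ g) ∩ c ⁻¹' {c x₀}
  have hS : BijOn (f ∘ g) S S :=
    (bijOn_periodicPts _).inter_mapsTo (fun x hx => by simpa [hcol] using hx)
      (fun x hx => by simpa [hcol] using hx.2)
  have hdisj : Disjoint S (g '' S) := by
    rw [Set.disjoint_left]
    rintro _ hx ⟨z, hz, rfl⟩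
    exact c.valid (hg z) (hz.2.trans hx.2.symm)
  have hpartner : ∀ x y, M.Adj x y → (x ∈ S ↔ y ∈ g '' S) := by
    intro x y hxy
    rw [hf_unique x y hxy]
    constructor
    · intro hx
      obtain ⟨z, hz, rfl⟩ := hS.surjOn hx
      exact ⟨z, hz, (hff _).symm⟩
    · rintro ⟨z, hz, hzx⟩
      rw [← hff x, ← hzx]
      exact hS.mapsTo hz
  obtain ⟨M', hM', hM'g⟩ := hM.exists_isPerfectMatching_forall_adj (fun x _ => hg x)
    hS.injOn.of_comp hdisj hpartner
  rw [huniq M' hM'] at hM'g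
  exact hgf x₀ (hf_unique _ _ (hM'g x₀ ⟨hx₀, rfl⟩))

end SimpleGraph.Subgraph

theorem stmt12_general {V : Type} [Fintype V] [Nonempty V]
    {G : SimpleGraph V} (hbip : G.Colorable 2)
    {M : G.Subgraph} (hM : M.IsPerfectMatching)
    (huniq : ∀ M' : G.Subgraph, M'.IsPerfectMatching → M' = M) :
    ∃ v w : V, G.Adj v w ∧ M.Adj v w ∧ (G.neighborSet v).ncard = 1 ∧
      ∃! N : (G.induce ({v, w}ᶜ : Set V)).Subgraph, N.IsPerfectMatching := by
  obtain ⟨v, w, hvw, hnbr⟩ := hM.exists_neighborSet_eq_singleton hbip huniq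
  refine ⟨v, w, M.adj_sub hvw, hvw, by rw [hnbr, ncard_singleton], ?_⟩
  exact hM.existsUnique_induce huniq fun x y hxy =>
    not_congr (hM.1.mem_pair_iff_of_adj hvw hxy)

/-- Every (nonempty) bipartite graph with a unique perfect matching contains a pendant
edge belonging to that matching; equivalently, it has an edge whose removal (along with
its endpoints) leaves a graph with a unique perfect matching. -/
theorem stmt12 {V : Type} [Fintype V] [DecidableEq V] [Nonempty V]
    {G : SimpleGraph V} (hbip : G.Colorable 2)
    {M : G.Subgraph} (hM : M.IsPerfectMatching)
    (huniq : ∀ M' : G.Subgraph, M'.IsPerfectMatching → M' = M) :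
    ∃ v w : V, G.Adj v w ∧ M.Adj v w ∧ (G.neighborSet v).ncard = 1 ∧
      ∃! N : (G.induce ({v, w}ᶜ : Set V)).Subgraph, N.IsPerfectMatching :=
  stmt12_general hbip hM huniq
end

section
/- A graph that can be obtained from a single vertex by a sequence of peripheral convex expansions is a median graph, and each peripheral convex expansion increases the number of Θ-classes (isometric dimension) by exactly one. -/
open SimpleGraph

/-- `S` is convex in `G`. -/
def IsConvexSet {V : Type} (G : SimpleGraph V) (S : Set V) : Prop :=
  ∀ u ∈ S, ∀ v ∈ S, ∀ w ∈ interval G u v, w ∈ S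

/-- The induced subgraph on `S` is an isometric subgraph of `G`. -/
def IsIsometricSet {V : Type} (G : SimpleGraph V) (S : Set V) : Prop :=
  ∀ u v : ↥S, (G.induce S).dist u v = G.dist u.1 v.1

/-- Underlying one-sided relation of the peripheral expansion of `G` along `S`:
a copy of `G` together with a disjoint copy of the subgraph induced on `S`, each
vertex of `S` in the copy of `G` being joined to the corresponding new vertex. -/
def periphRel {V : Type} (G : SimpleGraph V) (S : Set V) :
    (V ⊕ ↥S) → (V ⊕ ↥S) → Prop
  | Sum.inl u, Sum.inl v => G.Adj u v
  | Sum.inl u, Sum.inr v => u = v.1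
  | Sum.inr _, Sum.inl _ => False
  | Sum.inr u, Sum.inr v => G.Adj u.1 v.1

/-- The peripheral expansion of `G` along `S`. -/
def periphExpansion {V : Type} (G : SimpleGraph V) (S : Set V) :
    SimpleGraph (V ⊕ ↥S) :=
  SimpleGraph.fromRel (periphRel G S)

/-- Graphs obtainable from a single vertex by a sequence of peripheral convex expansions. -/
inductive BuiltByPeripheralConvexExpansions : ∀ (V : Type), SimpleGraph V → Prop
  | single : BuiltByPeripheralConvexExpansions PUnit ⊥
  | expand {V : Type} {G : SimpleGraph V} (S : Set V) (hne : S.Nonempty)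
      (hiso : IsIsometricSet G S) (hconv : IsConvexSet G S)
      (hG : BuiltByPeripheralConvexExpansions V G) :
      BuiltByPeripheralConvexExpansions (V ⊕ ↥S) (periphExpansion G S)

/-!
An isometric embedding into `Q_k` makes medians unique (in the cube they are coordinatewise
majorities), and it sends each edge to a single coordinate flip, Θ-unrelated edges to different
coordinates; so `k` pairwise Θ-unrelated edges force `idim G = k`. It therefore suffices to carry
along the expansion sequence: `G` is connected, has medians, embeds isometrically in `Q_k` and has
`k` pairwise Θ-unrelated edges.

The expansion along an isometric `S` is the subgraph of `G □ K₂` induced on `V × {0} ∪ S × {1}`,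
with the distances of `G □ K₂`. Hence the embedding extends by the layer coordinate, the new edge
`s s'` is Θ-unrelated to all old ones, and the median of three vertices lies over the median of
their projections, in the majority layer; convexity of `S` is what puts it there when that layer
is the new one.
-/

section Hamming

variable {ι : Type*} [Fintype ι]

lemma hammingDist_eq_sum_ite {β : Type*} [DecidableEq β] (x y : ι → β) :
    hammingDist x y = ∑ i, if x i = y i then 0 else 1 := by
  simp [hammingDist, Finset.card_filter, ite_not]

lemma hammingDist_cons {n : ℕ} {β : Type*} [DecidableEq β] (a b : β) (x y : Fin n → β) :
    hammingDist (Fin.cons a x : Fin (n + 1) → β) (Fin.cons b y) =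
      (if a = b then 0 else 1) + hammingDist x y := by
  simp [hammingDist_eq_sum_ite, Fin.sum_univ_succ]

lemma hammingDist_add_hammingDist_eq_iff (x p y : ι → Bool) :
    hammingDist x p + hammingDist p y = hammingDist x y ↔ ∀ i, x i = y i → p i = x i := by
  have pointwise (a b c : Bool) :
      (if a = c then 0 else 1) ≤ (if a = b then 0 else 1) + (if b = c then 0 else 1) ∧
      ((if a = c then 0 else 1) = (if a = b then 0 else 1) + (if b = c then 0 else 1) ↔
        (a = c → b = a)) := by
    revert a b c; decide
  simp only [hammingDist_eq_sum_ite, ← Finset.sum_add_distrib]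
  rw [eq_comm, Finset.sum_eq_sum_iff_of_le fun i _ => (pointwise (x i) (p i) (y i)).1]
  simp only [Finset.mem_univ, true_implies, (pointwise _ _ _).2]

lemma Bool.eq_of_between {a b c p q : Bool}
    (hp : (a = b → p = a) ∧ (b = c → p = b) ∧ (a = c → p = a))
    (hq : (a = b → q = a) ∧ (b = c → q = b) ∧ (a = c → q = a)) : p = q := by
  revert a b c p q; decide

lemma hammingDist_add_ne_of_flip {a b x y : ι → Bool} {γ : ι}
    (hab : ∀ i, a i ≠ b i ↔ i = γ) (hxy : ∀ i, x i ≠ y i ↔ i = γ) :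
    hammingDist a x + hammingDist b y ≠ hammingDist a y + hammingDist b x := by
  classical
  intro h
  simp only [hammingDist_eq_sum_ite, ← Finset.sum_add_distrib] at h
  have off_flip : ∀ i ∈ Finset.univ.erase γ, ((if a i = x i then 0 else 1) +
      if b i = y i then 0 else 1) = (if a i = y i then 0 else 1) + if b i = x i then 0 else 1 := by
    intro i hi
    have hi := Finset.ne_of_mem_erase hi
    rw [not_not.mp ((hab i).not.mpr hi), not_not.mp ((hxy i).not.mpr hi)]
  rw [← Finset.add_sum_erase _ _ (Finset.mem_univ γ),
    ← Finset.add_sum_erase _ _ (Finset.mem_univ γ), Finset.sum_congr rfl off_flip] at h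
  have at_flip : ∀ a b x y : Bool, a ≠ b → x ≠ y → ((if a = x then 0 else 1) +
      if b = y then 0 else 1) ≠ (if a = y then 0 else 1) + if b = x then 0 else 1 := by
    decide
  exact at_flip _ _ _ _ ((hab γ).2 rfl) ((hxy γ).2 rfl) (Nat.add_right_cancel h)

end Hamming

/-- The Djoković–Winkler relation `Θ` on (oriented) edges. -/
def ThetaRel {V : Type} (G : SimpleGraph V) (e e' : V × V) : Prop :=
  G.dist e.1 e'.1 + G.dist e.2 e'.2 ≠ G.dist e.1 e'.2 + G.dist e.2 e'.1

def HasMedians {V : Type} (G : SimpleGraph V) : Prop :=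
  ∀ x y z : V, ∃ m, m ∈ interval G x y ∩ interval G y z ∩ interval G x z

namespace IsIsomEmb

variable {V : Type} {G : SimpleGraph V} {n : ℕ} {f : V → Fin n → Bool}

lemma injective (hG : G.Connected) (hf : IsIsomEmb G n f) : Function.Injective f :=
  fun u v h => hG.dist_eq_zero_iff.mp (by rw [← hf, h, hammingDist_self])

lemma mem_interval_iff (hf : IsIsomEmb G n f) {u v w : V} :
    w ∈ interval G u v ↔ ∀ i, f u i = f v i → f w i = f u i := by
  change G.dist u w + G.dist w v = G.dist u v ↔ _
  rw [← hf, ← hf, ← hf, hammingDist_add_hammingDist_eq_iff]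

lemma exists_flip (hf : IsIsomEmb G n f) {u v : V} (h : G.Adj u v) :
    ∃ γ, ∀ i, f u i ≠ f v i ↔ i = γ := by
  have h1 : hammingDist (f u) (f v) = 1 := by rw [hf]; exact dist_eq_one_iff_adj.mpr h
  obtain ⟨γ, hγ⟩ := Finset.card_eq_one.mp h1
  exact ⟨γ, fun i => by simpa using Finset.ext_iff.mp hγ i⟩

lemma card_le_of_pairwise_not_thetaRel (hf : IsIsomEmb G n f) {ι : Type*} [Fintype ι]
    (e : ι → V × V) (hadj : ∀ i, G.Adj (e i).1 (e i).2)
    (hΘ : Pairwise fun i j => ¬ ThetaRel G (e i) (e j)) : Fintype.card ι ≤ n := by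
  choose c hc using fun i => hf.exists_flip (hadj i)
  suffices Function.Injective c by simpa using Fintype.card_le_of_injective c this
  intro i j hij
  by_contra hne
  refine hammingDist_add_ne_of_flip (hc i) (hij ▸ hc j) ?_
  rw [hf, hf, hf, hf]
  exact not_not.mp (hΘ hne)

end IsIsomEmb

lemma isMedianGraph_of_isIsomEmb {V : Type} {G : SimpleGraph V} {n : ℕ} {f : V → Fin n → Bool}
    (hG : G.Connected) (hf : IsIsomEmb G n f) (hmed : HasMedians G) : IsMedianGraph G := by
  refine ⟨hG, fun x y z => ?_⟩
  obtain ⟨m, hm⟩ := hmed x y z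
  refine ⟨m, hm, fun p hp => hf.injective hG (funext fun i => ?_)⟩
  simp only [Set.mem_inter_iff, hf.mem_interval_iff] at hm hp
  exact Bool.eq_of_between ⟨hp.1.1 i, hp.1.2 i, hp.2 i⟩ ⟨hm.1.1 i, hm.1.2 i, hm.2 i⟩

lemma idim_eq_of_isIsomEmb {V : Type} {G : SimpleGraph V} {k : ℕ} {f : V → Fin k → Bool}
    (hf : IsIsomEmb G k f) (e : Fin k → V × V) (hadj : ∀ i, G.Adj (e i).1 (e i).2)
    (hΘ : Pairwise fun i j => ¬ ThetaRel G (e i) (e j)) : idim G = k :=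
  le_antisymm (Nat.sInf_le ⟨f, hf⟩) <| le_csInf ⟨k, f, hf⟩ fun _ ⟨_, hg⟩ => by
    simpa using hg.card_le_of_pairwise_not_thetaRel e hadj hΘ

lemma SimpleGraph.Reachable.dist_map_le {V W : Type*} {G : SimpleGraph V} {H : SimpleGraph W}
    (φ : G →g H) {u v : V} (h : G.Reachable u v) : H.dist (φ u) (φ v) ≤ G.dist u v := by
  obtain ⟨w, hw⟩ := h.exists_walk_length_eq_dist
  exact (dist_le (w.map φ)).trans (by rw [Walk.length_map, hw])

lemma SimpleGraph.dist_boxProd {α β : Type*} {G : SimpleGraph α} {H : SimpleGraph β}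
    (hG : G.Preconnected) (hH : H.Preconnected) (x y : α × β) :
    (G □ H).dist x y = G.dist x.1 y.1 + H.dist x.2 y.2 := by
  have hGH : (G □ H).Reachable x y := reachable_boxProd.mpr ⟨hG _ _, hH _ _⟩
  have := edist_boxProd (G := G) (H := H) x y
  rw [← hGH.coe_dist_eq_edist, ← (hG x.1 y.1).coe_dist_eq_edist,
    ← (hH x.2 y.2).coe_dist_eq_edist] at this
  exact_mod_cast this

lemma IsIsometricSet.induce_preconnected {V : Type} {G : SimpleGraph V} {S : Set V}
    (hG : G.Connected) (hS : IsIsometricSet G S) : (G.induce S).Preconnected := by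
  intro s t
  rcases eq_or_ne s t with rfl | hst
  · rfl
  · refine Reachable.of_dist_ne_zero ?_
    rw [hS, Ne, hG.dist_eq_zero_iff]
    exact Subtype.coe_ne_coe.mpr hst

namespace PeriphExpansion

variable {V : Type} {G : SimpleGraph V} {S : Set V}

def proj : V ⊕ S → V := Sum.elim id Subtype.val

@[simp] lemma proj_inl (u : V) : proj (S := S) (.inl u) = u := rfl
@[simp] lemma proj_inr (s : S) : proj (.inr s) = s.1 := rfl

lemma proj_mem {a : V ⊕ S} (h : a.isRight) : proj a ∈ S := by
  cases a with
  | inl u => simp at h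
  | inr s => exact s.2

lemma adj_iff {a b : V ⊕ S} :
    (periphExpansion G S).Adj a b ↔
      (G □ (⊤ : SimpleGraph Bool)).Adj (proj a, a.isRight) (proj b, b.isRight) := by
  cases a <;> cases b <;>
    simp [periphExpansion, periphRel, boxProd_adj, Subtype.ext_iff, eq_comm, G.adj_comm] <;>
    exact Adj.ne

def toBoxProd : periphExpansion G S →g G □ (⊤ : SimpleGraph Bool) :=
  ⟨fun a => (proj a, a.isRight), adj_iff.mp⟩

def inlHom : G →g periphExpansion G S :=
  ⟨Sum.inl, fun h => adj_iff.mpr (by simpa [boxProd_adj] using h)⟩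

def inrHom : G.induce S →g periphExpansion G S :=
  ⟨Sum.inr, fun h => adj_iff.mpr (by simpa [boxProd_adj] using h)⟩

@[simp] lemma inlHom_apply (u : V) : inlHom (G := G) (S := S) u = .inl u := rfl
@[simp] lemma inrHom_apply (s : S) : inrHom (G := G) s = .inr s := rfl

lemma adj_inl_inr (s : S) : (periphExpansion G S).Adj (.inl s.1) (.inr s) :=
  adj_iff.mpr (by simp [boxProd_adj])

lemma connected (hG : G.Connected) : (periphExpansion G S).Connected := by
  have to_inl (a : V ⊕ S) : (periphExpansion G S).Reachable a (.inl (proj a)) := by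
    cases a with
    | inl u => rfl
    | inr s => exact (adj_inl_inr s).symm.reachable
  have : Nonempty V := hG.nonempty
  refine (connected_iff _).mpr ⟨fun a b => ?_, inferInstance⟩
  exact (to_inl a).trans (((hG _ _).map inlHom).trans (to_inl b).symm)

def liftEdges {k : ℕ} (s : S) (e : Fin k → V × V) : Fin (k + 1) → (V ⊕ S) × (V ⊕ S) :=
  Fin.cons (.inl s.1, .inr s) fun i => (.inl (e i).1, .inl (e i).2)

variable (hG : G.Connected) (hS : IsIsometricSet G S)
include hG hS

theorem dist_eq (a b : V ⊕ S) :
    (periphExpansion G S).dist a b =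
      G.dist (proj a) (proj b) + if a.isRight = b.isRight then 0 else 1 := by
  have dist_boxProd_top : ∀ x y : V × Bool,
      (G □ (⊤ : SimpleGraph Bool)).dist x y = G.dist x.1 y.1 + if x.2 = y.2 then 0 else 1 := by
    intro x y
    rw [dist_boxProd hG.preconnected preconnected_top, dist_top]
  refine le_antisymm ?_ <| (dist_boxProd_top (proj a, a.isRight) (proj b, b.isRight)).symm.trans_le
    (((connected hG).preconnected a b).dist_map_le toBoxProd)
  have inl_inl (u v : V) : (periphExpansion G S).dist (.inl u) (.inl v) ≤ G.dist u v := by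
    simpa using (hG.preconnected u v).dist_map_le (inlHom (S := S))
  have inl_inr (u : V) (s : S) : (periphExpansion G S).dist (.inl u) (.inr s) ≤ G.dist u s + 1 :=
    calc (periphExpansion G S).dist (.inl u) (.inr s)
        ≤ (periphExpansion G S).dist (.inl u) (.inl s.1) +
          (periphExpansion G S).dist (.inl s.1) (.inr s) := (connected hG).dist_triangle
      _ ≤ G.dist u s + 1 := by
        rw [dist_eq_one_iff_adj.mpr (adj_inl_inr s)]
        exact Nat.add_le_add_right (inl_inl u s) 1
  cases a with
  | inl u =>
    cases b with
    | inl v => simpa using inl_inl u v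
    | inr s => simpa using inl_inr u s
  | inr s =>
    cases b with
    | inl v => simpa [dist_comm] using inl_inr v s
    | inr t => simpa [← hS s t] using (hS.induce_preconnected hG s t).dist_map_le inrHom

lemma mem_interval_iff {a b w : V ⊕ S} :
    w ∈ interval (periphExpansion G S) a b ↔
      proj w ∈ interval G (proj a) (proj b) ∧ (a.isRight = b.isRight → w.isRight = a.isRight) := by
  change _ + _ = _ ↔ G.dist _ _ + G.dist _ _ = G.dist _ _ ∧ _
  have htri : G.dist (proj a) (proj b) ≤ G.dist (proj a) (proj w) + G.dist (proj w) (proj b) :=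
    hG.dist_triangle
  rw [dist_eq hG hS, dist_eq hG hS, dist_eq hG hS]
  cases a.isRight <;> cases w.isRight <;> cases b.isRight <;> simp <;> omega

theorem hasMedians (hconv : IsConvexSet G S) (hmed : HasMedians G) :
    HasMedians (periphExpansion G S) := by
  intro x y z
  obtain ⟨m₀, ⟨hxy, hyz⟩, hxz⟩ := hmed (proj x) (proj y) (proj z)
  have lift : ∃ m : V ⊕ S, proj m = m₀ ∧
      m.isRight = (x.isRight && y.isRight || y.isRight && z.isRight || x.isRight && z.isRight) := by
    cases hμ : (x.isRight && y.isRight || y.isRight && z.isRight || x.isRight && z.isRight)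
    · exact ⟨.inl m₀, rfl, rfl⟩
    · have hm₀ : m₀ ∈ S := by
        simp only [Bool.or_eq_true, Bool.and_eq_true] at hμ
        rcases hμ with (⟨hx, hy⟩ | ⟨hy, hz⟩) | ⟨hx, hz⟩
        · exact hconv _ (proj_mem hx) _ (proj_mem hy) _ hxy
        · exact hconv _ (proj_mem hy) _ (proj_mem hz) _ hyz
        · exact hconv _ (proj_mem hx) _ (proj_mem hz) _ hxz
      exact ⟨.inr ⟨m₀, hm₀⟩, rfl, rfl⟩
  obtain ⟨m, hm, hmμ⟩ := lift
  refine ⟨m, ?_⟩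
  simp only [Set.mem_inter_iff, mem_interval_iff hG hS, hm, hmμ, hxy, hyz, hxz, true_and]
  cases x.isRight <;> cases y.isRight <;> cases z.isRight <;> decide

lemma isIsomEmb {k : ℕ} {f : V → Fin k → Bool} (hf : IsIsomEmb G k f) :
    IsIsomEmb (periphExpansion G S) (k + 1) fun a => Fin.cons a.isRight (f (proj a)) :=
  fun a b => by rw [hammingDist_cons, hf, dist_eq hG hS, add_comm]

lemma pairwise_not_thetaRel_liftEdges {k : ℕ} (s : S) {e : Fin k → V × V}
    (hΘ : Pairwise fun i j => ¬ ThetaRel G (e i) (e j)) :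
    Pairwise fun i j => ¬ ThetaRel (periphExpansion G S) (liftEdges s e i) (liftEdges s e j) := by
  intro i j hij
  cases i using Fin.cases <;> cases j using Fin.cases
  · exact absurd rfl hij
  · simp [liftEdges, ThetaRel, dist_eq hG hS]
    omega
  · simp [liftEdges, ThetaRel, dist_eq hG hS]
    omega
  · simpa [liftEdges, ThetaRel, dist_eq hG hS] using hΘ fun h => hij (congrArg _ h)

end PeriphExpansion

structure MedianPartialCube {V : Type} (G : SimpleGraph V) (k : ℕ) : Prop where
  connected : G.Connected
  hasMedians : HasMedians G
  embedding : ∃ f : V → Fin k → Bool, IsIsomEmb G k f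
  thetaFreeEdges : ∃ e : Fin k → V × V,
    (∀ i, G.Adj (e i).1 (e i).2) ∧ Pairwise fun i j => ¬ ThetaRel G (e i) (e j)

namespace MedianPartialCube

variable {V : Type} {G : SimpleGraph V} {k : ℕ}

lemma isMedianGraph (h : MedianPartialCube G k) : IsMedianGraph G :=
  h.embedding.elim fun _ hf => isMedianGraph_of_isIsomEmb h.connected hf h.hasMedians

lemma idim_eq (h : MedianPartialCube G k) : idim G = k := by
  obtain ⟨f, hf⟩ := h.embedding
  obtain ⟨e, hadj, hΘ⟩ := h.thetaFreeEdges
  exact idim_eq_of_isIsomEmb hf e hadj hΘ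

lemma singleton : MedianPartialCube (⊥ : SimpleGraph PUnit) 0 where
  connected := (connected_iff _).mpr ⟨fun _ _ => .rfl, inferInstance⟩
  hasMedians x _ _ := ⟨x, by simp [interval]⟩
  embedding := ⟨fun _ => Fin.elim0, fun _ _ => by simp⟩
  thetaFreeEdges := ⟨Fin.elim0, Fin.elim0, fun i => i.elim0⟩

lemma periphExpansion (h : MedianPartialCube G k) {S : Set V} (hne : S.Nonempty)
    (hS : IsIsometricSet G S) (hconv : IsConvexSet G S) :
    MedianPartialCube (periphExpansion G S) (k + 1) := by
  obtain ⟨f, hf⟩ := h.embedding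
  obtain ⟨e, hadj, hΘ⟩ := h.thetaFreeEdges
  obtain ⟨s, hs⟩ := hne
  refine ⟨PeriphExpansion.connected h.connected,
    PeriphExpansion.hasMedians h.connected hS hconv h.hasMedians,
    ⟨_, PeriphExpansion.isIsomEmb h.connected hS hf⟩,
    ⟨PeriphExpansion.liftEdges ⟨s, hs⟩ e, fun i => ?_,
      PeriphExpansion.pairwise_not_thetaRel_liftEdges h.connected hS ⟨s, hs⟩ hΘ⟩⟩
  cases i using Fin.cases
  · exact PeriphExpansion.adj_inl_inr _
  · exact PeriphExpansion.inlHom.map_adj (hadj _)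

end MedianPartialCube

lemma BuiltByPeripheralConvexExpansions.exists_medianPartialCube {V : Type} {G : SimpleGraph V}
    (h : BuiltByPeripheralConvexExpansions V G) : ∃ k, MedianPartialCube G k := by
  induction h with
  | single => exact ⟨0, .singleton⟩
  | expand S hne hS hconv _ ih =>
    obtain ⟨k, hk⟩ := ih
    exact ⟨k + 1, hk.periphExpansion hne hS hconv⟩

/-- A graph obtained from a single vertex by a sequence of peripheral convex expansions
is a median graph, and each peripheral convex expansion increases the number of
Θ-classes (the isometric dimension) by exactly one. -/
theorem stmt17 :
    (∀ (V : Type) (G : SimpleGraph V),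
      BuiltByPeripheralConvexExpansions V G → IsMedianGraph G) ∧
    (∀ (V : Type) (G : SimpleGraph V) (S : Set V), S.Nonempty →
      IsIsometricSet G S → IsConvexSet G S →
      BuiltByPeripheralConvexExpansions V G →
      idim (periphExpansion G S) = idim G + 1) := by
  refine ⟨fun V G hG => ?_, fun V G S hne hS hconv hG => ?_⟩
  · obtain ⟨k, hk⟩ := hG.exists_medianPartialCube
    exact hk.isMedianGraph
  · obtain ⟨k, hk⟩ := hG.exists_medianPartialCube
    rw [hk.idim_eq, (hk.periphExpansion hne hS hconv).idim_eq]
end
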